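/- arXiv:2302.00194 — 4 statements merged into one kernel-verified Lean document; each statement's English description precedes it below -/
import Mathlib

section
/- For every f : X → (0,1), every γ, γ* ∈ ℝ and every noise rate e ∈ [0,1] for which all the expectations below are finite, E_{(x,ỹ)∼D̃}[ℓ(f(x), ỹ^γ)] = E_{(x,y)∼D}[ℓ(f(x), y^{γ*})] + (γ* − γ − e + 2γe) · E_{(x,y)∼D}[ℓ(f(x), 1−y) − ℓ(f(x), y)]. -/
open MeasureTheory Real

/-- Binary cross-entropy loss: `ℓ(t, y) = −y log t − (1−y) log(1−t)` with labels in {0,1}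
encoded as `Bool` (`true = 1`, `false = 0`). -/
noncomputable def closs (t : ℝ) (y : Bool) : ℝ :=
  if y then -Real.log t else -Real.log (1 - t)


def flipE (X : Type*) [MeasurableSpace X] : (X × Bool) ≃ᵐ (X × Bool) where
  toFun xy := (xy.1, !xy.2)
  invFun xy := (xy.1, !xy.2)
  left_inv := fun ⟨x,y⟩ => by simp
  right_inv := fun ⟨x,y⟩ => by simp
  measurable_toFun := measurable_fst.prodMk (Measurable.comp (measurable_of_countable (fun b : Bool => !b)) measurable_snd)
  measurable_invFun := measurable_fst.prodMk (Measurable.comp (measurable_of_countable (fun b : Bool => !b)) measurable_snd)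

/-- For symmetric label noise with rate e (the noisy distribution `D̃` flips
the clean label of `D` independently with probability e), for every `f : X → (0,1)`, every
γ, γ* ∈ ℝ and every e ∈ [0,1] for which all expectations are finite:
`E_{D̃}[ℓ(f(x), ỹ^γ)] = E_D[ℓ(f(x), y^{γ*})] + (γ* − γ − e + 2γe)·E_D[ℓ(f(x),1−y) − ℓ(f(x),y)]`. -/
theorem stmt9 {X : Type*} [MeasurableSpace X]
    (D : Measure (X × Bool)) [IsProbabilityMeasure D]
    (e : ℝ) (he : e ∈ Set.Icc (0:ℝ) 1)
    (Dnoisy : Measure (X × Bool))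
    (hD : Dnoisy = (ENNReal.ofReal (1 - e)) • D
        + (ENNReal.ofReal e) • D.map (fun xy => (xy.1, !xy.2)))
    (f : X → ℝ) (hf : ∀ x, f x ∈ Set.Ioo (0:ℝ) 1)
    (γ γstar : ℝ)
    (hint1 : Integrable (fun xy : X × Bool => closs (f xy.1) xy.2) D)
    (hint2 : Integrable (fun xy : X × Bool => closs (f xy.1) (!xy.2)) D)
    (hint3 : Integrable (fun xy : X × Bool =>
        γ * closs (f xy.1) xy.2 + (1 - γ) * closs (f xy.1) (!xy.2)) Dnoisy) :
    (∫ xy, (γ * closs (f xy.1) xy.2 + (1 - γ) * closs (f xy.1) (!xy.2)) ∂Dnoisy)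
    = (∫ xy, (γstar * closs (f xy.1) xy.2 + (1 - γstar) * closs (f xy.1) (!xy.2)) ∂D)
      + (γstar - γ - e + 2 * γ * e)
        * ∫ xy, (closs (f xy.1) (!xy.2) - closs (f xy.1) xy.2) ∂D := by
  obtain ⟨he0, he1⟩ := he
  have hemb : MeasurableEmbedding (fun xy : X × Bool => (xy.1, !xy.2)) :=
    (flipE X).measurableEmbedding
  set c1 : X × Bool → ℝ := fun xy => closs (f xy.1) xy.2 with hc1
  set c2 : X × Bool → ℝ := fun xy => closs (f xy.1) (!xy.2) with hc2
  have hcomp1 : (fun xy : X × Bool => c1 (xy.1, !xy.2)) = c2 := by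
    funext xy; simp [hc1, hc2]
  have hcomp2 : (fun xy : X × Bool => c2 (xy.1, !xy.2)) = c1 := by
    funext xy; simp [hc1, hc2]
  set g : X × Bool → ℝ := fun xy => γ * c1 xy + (1 - γ) * c2 xy with hg
  have hgD : Integrable g D := (hint1.const_mul γ).add (hint2.const_mul (1 - γ))
  have hgflip : Integrable (fun xy : X × Bool => γ * c2 xy + (1 - γ) * c1 xy) D :=
    (hint2.const_mul γ).add (hint1.const_mul (1 - γ))
  have hgmap : Integrable g (D.map (fun xy : X × Bool => (xy.1, !xy.2))) := by
    rw [hemb.integrable_map_iff]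
    have : (g ∘ fun xy : X × Bool => (xy.1, !xy.2))
        = fun xy : X × Bool => γ * c2 xy + (1 - γ) * c1 xy := by
      funext xy; simp only [Function.comp, hg]
      rw [show c1 (xy.1, !xy.2) = c2 xy from congrFun hcomp1 xy,
          show c2 (xy.1, !xy.2) = c1 xy from congrFun hcomp2 xy]
    rw [this]; exact hgflip
  have hA : ∫ xy, g xy ∂D = γ * (∫ xy, c1 xy ∂D) + (1 - γ) * (∫ xy, c2 xy ∂D) := by
    rw [hg]
    rw [integral_add (hint1.const_mul γ) (hint2.const_mul (1 - γ)),
        integral_const_mul, integral_const_mul]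
  have hB : ∫ xy, g ((fun xy : X × Bool => (xy.1, !xy.2)) xy) ∂D
      = γ * (∫ xy, c2 xy ∂D) + (1 - γ) * (∫ xy, c1 xy ∂D) := by
    have : (fun xy : X × Bool => g (xy.1, !xy.2))
        = fun xy : X × Bool => γ * c2 xy + (1 - γ) * c1 xy := by
      funext xy; simp only [hg]
      rw [show c1 (xy.1, !xy.2) = c2 xy from congrFun hcomp1 xy,
          show c2 (xy.1, !xy.2) = c1 xy from congrFun hcomp2 xy]
    rw [show (fun xy : X × Bool => g ((fun xy : X × Bool => (xy.1, !xy.2)) xy))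
        = fun xy : X × Bool => g (xy.1, !xy.2) from rfl, this,
        integral_add (hint2.const_mul γ) (hint1.const_mul (1 - γ)),
        integral_const_mul, integral_const_mul]
  have key : (∫ xy, g xy ∂Dnoisy)
      = (1 - e) * (∫ xy, g xy ∂D)
        + e * (γ * (∫ xy, c2 xy ∂D) + (1 - γ) * (∫ xy, c1 xy ∂D)) := by
    rw [hD, integral_add_measure (hgD.smul_measure ENNReal.ofReal_ne_top)
          (hgmap.smul_measure ENNReal.ofReal_ne_top),
        integral_smul_measure, integral_smul_measure, hemb.integral_map,
        ENNReal.toReal_ofReal (by linarith), ENNReal.toReal_ofReal he0, hB]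
    simp [smul_eq_mul]
  have hRHS1 : (∫ xy, (γstar * c1 xy + (1 - γstar) * c2 xy) ∂D)
      = γstar * (∫ xy, c1 xy ∂D) + (1 - γstar) * (∫ xy, c2 xy ∂D) := by
    rw [integral_add (hint1.const_mul γstar) (hint2.const_mul (1 - γstar)),
        integral_const_mul, integral_const_mul]
  have hRHS2 : (∫ xy, (c2 xy - c1 xy) ∂D) = (∫ xy, c2 xy ∂D) - (∫ xy, c1 xy ∂D) :=
    integral_sub hint2 hint1
  show (∫ xy, g xy ∂Dnoisy) = _
  rw [key, hA]
  show _ = (∫ xy, (γstar * c1 xy + (1 - γstar) * c2 xy) ∂D)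
      + (γstar - γ - e + 2 * γ * e) * ∫ xy, (c2 xy - c1 xy) ∂D
  rw [hRHS1, hRHS2]; ring
end

section
/- If the noise rate satisfies e ∈ [0, 1/2) and the smoothing parameter is chosen as γ = (γ* − e)/(1 − 2e), then the coefficient γ* − γ − e + 2γe vanishes, and consequently E_{(x,ỹ)∼D̃}[ℓ(f(x), ỹ^γ)] = E_{(x,y)∼D}[ℓ(f(x), y^{γ*})] for every f : X → (0,1) for which the expectations are finite; in particular, when e = 0 this optimal choice is γ = γ*. -/
open MeasureTheory Real

/-!
Symmetric noise turns the clean law `D` into the mixture `(1 - e) D + e (D ∘ flip⁻¹)`, and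
flipping the label turns the `γ`-smoothed loss into the `(1 - γ)`-smoothed one. Hence the
noisy risk of the `γ`-smoothed loss is the clean risk of the loss smoothed with
`(1 - e) γ + e (1 - γ) = γ - 2γe + e`, which is `γ*` exactly when `γ = (γ* - e)/(1 - 2e)`.
-/

theorem integral_ofReal_smul_add_ofReal_smul_map {α : Type*} [MeasurableSpace α]
    {μ : Measure α} {φ : α → α} (hφ : MeasurableEmbedding φ) {a b : ℝ} (ha : 0 ≤ a) (hb : 0 ≤ b)
    {g : α → ℝ} (hg : Integrable g μ) (hgφ : Integrable (g ∘ φ) μ) :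
    ∫ x, g x ∂(ENNReal.ofReal a • μ + ENNReal.ofReal b • μ.map φ)
      = a * ∫ x, g x ∂μ + b * ∫ x, g (φ x) ∂μ := by
  have hg_map : Integrable g (μ.map φ) := hφ.integrable_map_iff.mpr hgφ
  rw [integral_add_measure (hg.smul_measure ENNReal.ofReal_ne_top)
      (hg_map.smul_measure ENNReal.ofReal_ne_top),
    integral_smul_measure, integral_smul_measure, hφ.integral_map,
    ENNReal.toReal_ofReal ha, ENNReal.toReal_ofReal hb, smul_eq_mul, smul_eq_mul]

theorem integral_const_mul_add_const_mul {α : Type*} [MeasurableSpace α] {μ : Measure α}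
    {u v : α → ℝ} (hu : Integrable u μ) (hv : Integrable v μ) (c d : ℝ) :
    ∫ x, (c * u x + d * v x) ∂μ = c * ∫ x, u x ∂μ + d * ∫ x, v x ∂μ := by
  rw [integral_add (hu.const_mul c) (hv.const_mul d), integral_const_mul, integral_const_mul]

theorem measurableEmbedding_flipLabel (X : Type*) [MeasurableSpace X] :
    MeasurableEmbedding (fun xy : X × Bool => (xy.1, !xy.2)) :=
  (MeasurableEquiv.ofInvolutive (fun xy : X × Bool => (xy.1, !xy.2))
    (fun xy => by simp) (by fun_prop)).measurableEmbedding

theorem smoothing_coeff_eq_zero {e γstar γ : ℝ} (he : 1 - 2 * e ≠ 0)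
    (hγ : γ = (γstar - e) / (1 - 2 * e)) :
    γstar - γ - e + 2 * γ * e = 0 := by
  rw [hγ]
  linear_combination -(div_mul_cancel₀ (γstar - e) he)

theorem noisy_smoothed_risk_eq {e γstar γ A B : ℝ} (hcoeff : γstar - γ - e + 2 * γ * e = 0) :
    (1 - e) * (γ * A + (1 - γ) * B) + e * (γ * B + (1 - γ) * A)
      = γstar * A + (1 - γstar) * B := by
  linear_combination (B - A) * hcoeff

theorem stmt10_general {X : Type*} [MeasurableSpace X]
    (D : Measure (X × Bool))
    (e : ℝ) (he : e ∈ Set.Ico (0:ℝ) (1/2))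
    (Dnoisy : Measure (X × Bool))
    (hD : Dnoisy = (ENNReal.ofReal (1 - e)) • D
        + (ENNReal.ofReal e) • D.map (fun xy => (xy.1, !xy.2)))
    (γstar γ : ℝ) (hγ : γ = (γstar - e) / (1 - 2 * e)) :
    (γstar - γ - e + 2 * γ * e = 0) ∧
    (∀ f : X → ℝ, (∀ x, f x ∈ Set.Ioo (0:ℝ) 1) →
      Integrable (fun xy : X × Bool => closs (f xy.1) xy.2) D →
      Integrable (fun xy : X × Bool => closs (f xy.1) (!xy.2)) D →
      Integrable (fun xy : X × Bool =>
        γ * closs (f xy.1) xy.2 + (1 - γ) * closs (f xy.1) (!xy.2)) Dnoisy →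
      (∫ xy, (γ * closs (f xy.1) xy.2 + (1 - γ) * closs (f xy.1) (!xy.2)) ∂Dnoisy)
        = ∫ xy, (γstar * closs (f xy.1) xy.2 + (1 - γstar) * closs (f xy.1) (!xy.2)) ∂D) ∧
    (e = 0 → γ = γstar) := by
  obtain ⟨he0, he2⟩ := he
  have hcoeff := smoothing_coeff_eq_zero (by linarith) hγ
  refine ⟨hcoeff, fun f _ hclean hflip _ => ?_, fun h0 => by rw [hγ, h0]; ring⟩
  rw [hD, integral_ofReal_smul_add_ofReal_smul_map (measurableEmbedding_flipLabel X)
      (g := fun xy => γ * closs (f xy.1) xy.2 + (1 - γ) * closs (f xy.1) (!xy.2))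
      (by linarith) he0 ((hclean.const_mul γ).fun_add (hflip.const_mul (1 - γ)))
      (by simpa only [Function.comp_def, Bool.not_not]
        using (hflip.const_mul γ).fun_add (hclean.const_mul (1 - γ)))]
  simp only [Bool.not_not]
  rw [integral_const_mul_add_const_mul hclean hflip, integral_const_mul_add_const_mul hflip hclean,
    integral_const_mul_add_const_mul hclean hflip]
  exact noisy_smoothed_risk_eq hcoeff

/-- Under symmetric label noise of rate e ∈ [0,1/2), choosing the smoothing
parameter `γ = (γ* − e)/(1 − 2e)` makes the coefficient `γ* − γ − e + 2γe` vanish, so that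
`E_{D̃}[ℓ(f(x), ỹ^γ)] = E_D[ℓ(f(x), y^{γ*})]` for every `f : X → (0,1)` with finite
expectations; in particular `e = 0` gives `γ = γ*`. -/
theorem stmt10 {X : Type*} [MeasurableSpace X]
    (D : Measure (X × Bool)) [IsProbabilityMeasure D]
    (e : ℝ) (he : e ∈ Set.Ico (0:ℝ) (1/2))
    (Dnoisy : Measure (X × Bool))
    (hD : Dnoisy = (ENNReal.ofReal (1 - e)) • D
        + (ENNReal.ofReal e) • D.map (fun xy => (xy.1, !xy.2)))
    (γstar γ : ℝ) (hγ : γ = (γstar - e) / (1 - 2 * e)) :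
    (γstar - γ - e + 2 * γ * e = 0) ∧
    (∀ f : X → ℝ, (∀ x, f x ∈ Set.Ioo (0:ℝ) 1) →
      Integrable (fun xy : X × Bool => closs (f xy.1) xy.2) D →
      Integrable (fun xy : X × Bool => closs (f xy.1) (!xy.2)) D →
      Integrable (fun xy : X × Bool =>
        γ * closs (f xy.1) xy.2 + (1 - γ) * closs (f xy.1) (!xy.2)) Dnoisy →
      (∫ xy, (γ * closs (f xy.1) xy.2 + (1 - γ) * closs (f xy.1) (!xy.2)) ∂Dnoisy)
        = ∫ xy, (γstar * closs (f xy.1) xy.2 + (1 - γstar) * closs (f xy.1) (!xy.2)) ∂D) ∧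
    (e = 0 → γ = γstar) :=
  stmt10_general D e he Dnoisy hD γstar γ hγ
end

section
/- The point (0,0) is a fixed point of F_η; the Jacobian of F_η at (0,0) equals the 2×2 real matrix [[1, −η(x_s−x_t)/2], [η(x_s−x_t)/2, 1]]; its complex eigenvalues are 1 ± (η/2)|x_s − x_t|·i; and both eigenvalues have modulus √(1 + η²(x_s−x_t)²/4) > 1 for every η > 0. Hence the local-convergence criterion requiring all eigenvalues of the Jacobian of the update operator at the fixed point to lie strictly inside the unit disc fails for every learning rate η > 0. -/
open Real

/-! At the origin both partial derivatives of `d(θe, θd) = φ(θd θe)` vanish, so `(0,0)` is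
fixed, and the Jacobian of the simultaneous step there is `I + η φ'(0) R`, with `R` the rotation
by a quarter turn and `φ'(0) = (x_s - x_t)/2` because the logistic loss has slope `1/2` at `0`.
A rotation–scaling matrix `!![a, -b; b, a]` has eigenvalues `a ± |b| i` of modulus
`√(a² + b²)`, here `√(1 + η²(x_s - x_t)²/4) > 1`. -/

theorem hasDerivAt_log_one_div_one_add_exp_neg (t : ℝ) :
    HasDerivAt (fun t => log (1 / (1 + exp (-t)))) (sigmoid (-t)) t := by
  have h := (hasDerivAt_sigmoid t).log (sigmoid_pos t).ne'
  rw [mul_div_cancel_left₀ _ (sigmoid_pos t).ne', ← sigmoid_neg] at h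
  simpa only [one_div, ← sigmoid_def] using h

theorem hasDerivAt_comp_mul_add_comp_neg_mul {f f' : ℝ → ℝ}
    (hf : ∀ t, HasDerivAt f (f' t) t) (xs xt p : ℝ) :
    HasDerivAt (fun p => f (p * xs) + f (-(p * xt)))
      (xs * f' (p * xs) - xt * f' (-(p * xt))) p := by
  have hs := (hf (p * xs)).comp p (hasDerivAt_mul_const xs)
  have ht := (hf (-(p * xt))).comp p (hasDerivAt_mul_const xt).neg
  exact (hs.add ht).congr_deriv (by ring)

/-- The update operator `F_η`: descent in the encoder `θe`, ascent in the discriminator. -/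
noncomputable def simGD (η : ℝ) (d : ℝ → ℝ → ℝ) (θ : ℝ × ℝ) : ℝ × ℝ :=
  (θ.1 - η * deriv (fun a => d a θ.2) θ.1, θ.2 + η * deriv (fun b => d θ.1 b) θ.2)

theorem simGD_comp_mul_zero (η : ℝ) (φ : ℝ → ℝ) :
    simGD η (fun a b => φ (b * a)) (0, 0) = (0, 0) := by
  simp [simGD]

section ProductObjective

variable {φ φ' : ℝ → ℝ}

theorem simGD_comp_mul (η : ℝ) (hφ : ∀ p, HasDerivAt φ (φ' p) p) :
    simGD η (fun a b => φ (b * a)) = fun θ =>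
      (θ.1 - η * (θ.2 * φ' (θ.2 * θ.1)), θ.2 + η * (θ.1 * φ' (θ.2 * θ.1))) := by
  funext θ
  have ha : HasDerivAt (fun a => φ (θ.2 * a)) (φ' (θ.2 * θ.1) * θ.2) θ.1 :=
    (hφ _).comp θ.1 (((hasDerivAt_id _).const_mul θ.2).congr_deriv (mul_one _))
  have hb : HasDerivAt (fun b => φ (b * θ.1)) (φ' (θ.2 * θ.1) * θ.1) θ.2 :=
    (hφ _).comp θ.2 (hasDerivAt_mul_const θ.1)
  simp only [simGD, ha.deriv, hb.deriv, mul_comm (φ' _)]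

theorem fderiv_simGD_comp_mul_zero (η : ℝ) (hφ : ∀ p, HasDerivAt φ (φ' p) p)
    (hφ' : DifferentiableAt ℝ φ' 0) (v : ℝ × ℝ) :
    fderiv ℝ (simGD η fun a b => φ (b * a)) (0, 0) v =
      (v.1 - η * φ' 0 * v.2, v.2 + η * φ' 0 * v.1) := by
  rw [simGD_comp_mul η hφ]
  have hψ : DifferentiableAt ℝ (fun θ : ℝ × ℝ => φ' (θ.2 * θ.1)) (0, 0) := by
    have h0 : DifferentiableAt ℝ φ' (((0, 0) : ℝ × ℝ).2 * ((0, 0) : ℝ × ℝ).1) := by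
      simpa using hφ'
    exact h0.comp (f := fun θ : ℝ × ℝ => θ.2 * θ.1) _ (by fun_prop)
  have h : HasFDerivAt (fun θ : ℝ × ℝ =>
      (θ.1 - η * (θ.2 * φ' (θ.2 * θ.1)), θ.2 + η * (θ.1 * φ' (θ.2 * θ.1)))) _ (0, 0) :=
    (hasFDerivAt_fst.sub ((hasFDerivAt_snd.mul hψ.hasFDerivAt).const_mul η)).prodMk
      (hasFDerivAt_snd.add ((hasFDerivAt_fst.mul hψ.hasFDerivAt).const_mul η))
  rw [h.fderiv]
  simp only [zero_smul, mul_zero, zero_add, ContinuousLinearMap.prod_apply, sub_apply,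
    ContinuousLinearMap.coe_fst', smul_apply, ContinuousLinearMap.coe_snd', smul_eq_mul,
    add_apply, Prod.mk.injEq]
  constructor <;> ring

end ProductObjective

open Complex in
theorem spectrum_map_ofReal_rotation (a b : ℝ) :
    spectrum ℂ ((!![a, -b; b, a]).map ((↑) : ℝ → ℂ)) =
      {(a : ℂ) + ((|b| : ℝ) : ℂ) * I, (a : ℂ) - ((|b| : ℝ) : ℂ) * I} := by
  ext μ
  have hb : ((|b| : ℝ) : ℂ) ^ 2 = (b : ℂ) ^ 2 := by rw [← ofReal_pow, sq_abs, ofReal_pow]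
  have key : μ ^ 2 - (a + a) * μ + (a * a + b * b) =
      (μ - (a + ((|b| : ℝ) : ℂ) * I)) * (μ - (a - ((|b| : ℝ) : ℂ) * I)) := by
    linear_combination (-1 : ℂ) * hb + ((|b| : ℝ) : ℂ) ^ 2 * I_sq
  rw [Matrix.mem_spectrum_iff_isRoot_charpoly, Matrix.charpoly_fin_two]
  simp only [Matrix.trace_fin_two, Matrix.det_fin_two, Matrix.map_apply, Matrix.of_apply,
    Matrix.cons_val', Matrix.cons_val_zero, Matrix.cons_val_fin_one, Matrix.cons_val_one,
    ofReal_neg, neg_mul, sub_neg_eq_add, Polynomial.IsRoot.def, Polynomial.eval_add,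
    Polynomial.eval_sub, Polynomial.eval_pow, Polynomial.eval_X, Polynomial.eval_mul,
    Polynomial.eval_C, Set.mem_insert_iff, Set.mem_singleton_iff]
  rw [key, mul_eq_zero, sub_eq_zero, sub_eq_zero]

open Complex in
theorem norm_of_mem_pair_add_sub_mul_I {a b : ℝ} {μ : ℂ}
    (hμ : μ ∈ ({(a : ℂ) + b * I, (a : ℂ) - b * I} : Set ℂ)) :
    ‖μ‖ = √(a ^ 2 + b ^ 2) := by
  rcases hμ with rfl | rfl
  · exact norm_add_mul_I a b
  · simpa [sub_eq_add_neg] using norm_add_mul_I a (-b)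

/-- For the toy DANN objective `d(θe, θd) = f(θd θe x_s) + f(−θd θe x_t)`
with `f(t) = log(1/(1+exp(−t)))`, the simultaneous gradient descent operator
`F_η(θe, θd) = (θe − η ∂d/∂θe, θd + η ∂d/∂θd)` fixes (0,0); its Jacobian there is
`[[1, −η(x_s−x_t)/2], [η(x_s−x_t)/2, 1]]`, whose complex eigenvalues are
`1 ± (η/2)|x_s − x_t| i`, both of modulus `√(1 + η²(x_s−x_t)²/4) > 1`; hence the
criterion that all eigenvalues lie strictly inside the unit disc fails for every η > 0. -/
theorem stmt13 (xs xt : ℝ) (hx : xs ≠ xt) (η : ℝ) (hη : 0 < η) :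
    let f : ℝ → ℝ := fun t => Real.log (1 / (1 + Real.exp (-t)))
    let d : ℝ → ℝ → ℝ := fun θe θd => f (θd * θe * xs) + f (-(θd * θe * xt))
    let F : ℝ × ℝ → ℝ × ℝ := fun θ =>
      (θ.1 - η * deriv (fun a => d a θ.2) θ.1, θ.2 + η * deriv (fun b => d θ.1 b) θ.2)
    let J : Matrix (Fin 2) (Fin 2) ℝ :=
      !![1, -(η * (xs - xt) / 2); η * (xs - xt) / 2, 1]
    let Jc : Matrix (Fin 2) (Fin 2) ℂ := J.map (fun a => (a : ℂ))
    F (0, 0) = (0, 0) ∧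
    (∀ v : ℝ × ℝ, fderiv ℝ F (0, 0) v
        = (J 0 0 * v.1 + J 0 1 * v.2, J 1 0 * v.1 + J 1 1 * v.2)) ∧
    spectrum ℂ Jc =
      {(1 : ℂ) + ((η / 2 * |xs - xt| : ℝ) : ℂ) * Complex.I,
       (1 : ℂ) - ((η / 2 * |xs - xt| : ℝ) : ℂ) * Complex.I} ∧
    (∀ μ ∈ spectrum ℂ Jc,
       ‖μ‖ = Real.sqrt (1 + η ^ 2 * (xs - xt) ^ 2 / 4) ∧ 1 < ‖μ‖) ∧
    ¬ (∀ μ ∈ spectrum ℂ Jc, ‖μ‖ < 1) := by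
  intro f d F J Jc
  let φ : ℝ → ℝ := fun p => f (p * xs) + f (-(p * xt))
  have hF : F = simGD η fun a b => φ (b * a) := rfl
  have hφ := hasDerivAt_comp_mul_add_comp_neg_mul hasDerivAt_log_one_div_one_add_exp_neg xs xt
  have hk : |η * (xs - xt) / 2| = η / 2 * |xs - xt| := by
    rw [abs_div, abs_mul, abs_of_pos hη, abs_two]; ring
  have hspec : spectrum ℂ Jc = {(1 : ℂ) + ((η / 2 * |xs - xt| : ℝ) : ℂ) * Complex.I,
      (1 : ℂ) - ((η / 2 * |xs - xt| : ℝ) : ℂ) * Complex.I} := by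
    simpa [hk] using spectrum_map_ofReal_rotation 1 (η * (xs - xt) / 2)
  have hnorm : ∀ μ ∈ spectrum ℂ Jc, ‖μ‖ = √(1 + η ^ 2 * (xs - xt) ^ 2 / 4) := by
    intro μ hμ
    rw [hspec, ← Complex.ofReal_one] at hμ
    rw [norm_of_mem_pair_add_sub_mul_I hμ, mul_pow, sq_abs]
    congr 1
    ring
  have hgt : 1 < √(1 + η ^ 2 * (xs - xt) ^ 2 / 4) := by
    have hxt := sub_ne_zero.mpr hx
    have hpos : 0 < η ^ 2 * (xs - xt) ^ 2 / 4 := by positivity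
    rw [Real.lt_sqrt zero_le_one]
    linarith
  refine ⟨hF ▸ simGD_comp_mul_zero η φ, fun v => ?_, hspec,
    fun μ hμ => ⟨hnorm μ hμ, hnorm μ hμ ▸ hgt⟩, fun hlt => ?_⟩
  · rw [hF, fderiv_simGD_comp_mul_zero η hφ (by fun_prop)]
    simp only [J, zero_mul, neg_zero, sigmoid_zero, Matrix.of_apply, Matrix.cons_val',
      Matrix.cons_val_zero, Matrix.cons_val_fin_one, Matrix.cons_val_one, Prod.mk.injEq]
    constructor <;> ring
  · have hmem : _ ∈ spectrum ℂ Jc := hspec ▸ Set.mem_insert _ _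
    linarith [hlt _ hmem, hnorm _ hmem]
end

section
/- The point (0,0) is a fixed point of F_η; the Jacobian of F_η at (0,0) equals the 2×2 real matrix [[1, −η n_e (x_s−x_t)/2], [η n_d (x_s−x_t)/2, 1 − η² n_e n_d (x_s−x_t)²/4]]; setting α = (η/2)√(n_e n_d)·|x_s − x_t|, its complex eigenvalues are λ = 1 − α²/2 ± √((1 − α²/2)² − 1) with product equal to 1; and both eigenvalues have modulus exactly 1 if and only if η ≤ 4/(√(n_e n_d)·|x_s − x_t|) (equivalently α ≤ 2), while some eigenvalue has modulus strictly greater than 1 otherwise. -/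
/-!
The objective depends on the parameters only through their product: `d θe θd = h (θd * θe)`.
Hence both partial gradients vanish at the origin, and since `h' 0 = (xs - xt) / 2` the two
updates linearize there to the shears `[[1, -η h' 0], [0, 1]]` and `[[1, 0], [η h' 0, 1]]`.
The Jacobian of `F_η` is a product of powers of these shears, so it has determinant `1` and
trace `2 - α²`; its eigenvalues are the roots of `μ² - (2 - α²) μ + 1`. When the trace lies in
`[-2, 2]` these roots form a complex-conjugate pair with product `1`, hence lie on the unit
circle; otherwise they are real with product `1`, and one of them has modulus `> 1`.
-/

open Real

noncomputable def logSigmoid (t : ℝ) : ℝ := log (1 / (1 + exp (-t)))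

theorem hasDerivAt_logSigmoid (t : ℝ) : HasDerivAt logSigmoid (sigmoid (-t)) t := by
  have h := (hasDerivAt_sigmoid t).log (sigmoid_pos t).ne'
  rw [mul_div_cancel_left₀ _ (sigmoid_pos t).ne', ← sigmoid_neg] at h
  convert h using 1
  funext u
  rw [logSigmoid, one_div, sigmoid_def]

/-- The toy DANN objective is `d θe θd = dannPotential xs xt (θd * θe)`. -/
noncomputable def dannPotential (xs xt u : ℝ) : ℝ := logSigmoid (u * xs) + logSigmoid (-(u * xt))

theorem deriv_dannPotential (xs xt : ℝ) :
    deriv (dannPotential xs xt) = fun u => xs * sigmoid (-(u * xs)) - xt * sigmoid (u * xt) := by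
  funext u
  have hs := (hasDerivAt_logSigmoid (u * xs)).comp u ((hasDerivAt_id' u).mul_const xs)
  have ht := (hasDerivAt_logSigmoid (-(u * xt))).comp u ((hasDerivAt_id' u).mul_const xt).neg
  have h : HasDerivAt (dannPotential xs xt) _ u := hs.add ht
  rw [h.deriv, neg_neg]
  ring

theorem deriv_dannPotential_zero (xs xt : ℝ) : deriv (dannPotential xs xt) 0 = (xs - xt) / 2 := by
  simp only [deriv_dannPotential, zero_mul, neg_zero, sigmoid_zero]
  ring

theorem differentiable_deriv_dannPotential (xs xt : ℝ) :
    Differentiable ℝ (deriv (dannPotential xs xt)) := by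
  rw [deriv_dannPotential]
  fun_prop

noncomputable def mat2CLM (a b c d : ℝ) : ℝ × ℝ →L[ℝ] ℝ × ℝ :=
  (a • ContinuousLinearMap.fst ℝ ℝ ℝ + b • ContinuousLinearMap.snd ℝ ℝ ℝ).prod
    (c • ContinuousLinearMap.fst ℝ ℝ ℝ + d • ContinuousLinearMap.snd ℝ ℝ ℝ)

@[simp]
theorem mat2CLM_apply (a b c d : ℝ) (v : ℝ × ℝ) :
    mat2CLM a b c d v = (a * v.1 + b * v.2, c * v.1 + d * v.2) := by
  simp [mat2CLM]

theorem mat2CLM_mul (a b c d a' b' c' d' : ℝ) :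
    mat2CLM a b c d * mat2CLM a' b' c' d' =
      mat2CLM (a * a' + b * c') (a * b' + b * d') (c * a' + d * c') (c * b' + d * d') := by
  ext <;> simp

theorem mat2CLM_one_zero_zero_one : mat2CLM 1 0 0 1 = 1 := by
  ext <;> simp

theorem mat2CLM_upper_pow (b : ℝ) (n : ℕ) : mat2CLM 1 b 0 1 ^ n = mat2CLM 1 (n * b) 0 1 := by
  induction n with
  | zero => simp [mat2CLM_one_zero_zero_one]
  | succ n ih => rw [pow_succ, ih, mat2CLM_mul]; push_cast; ring_nf

theorem mat2CLM_lower_pow (c : ℝ) (n : ℕ) : mat2CLM 1 0 c 1 ^ n = mat2CLM 1 0 (n * c) 1 := by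
  induction n with
  | zero => simp [mat2CLM_one_zero_zero_one]
  | succ n ih => rw [pow_succ, ih, mat2CLM_mul]; push_cast; ring_nf

section AlternatingGradientSteps

/- `g` stands for `h'`, where the objective is `(θe, θd) ↦ h (θd * θe)`; see `encoderStep_eq`. -/
variable (η : ℝ) (g : ℝ → ℝ)

def encoderStep (θ : ℝ × ℝ) : ℝ × ℝ := (θ.1 - η * (θ.2 * g (θ.2 * θ.1)), θ.2)

def discriminatorStep (θ : ℝ × ℝ) : ℝ × ℝ := (θ.1, θ.2 + η * (θ.1 * g (θ.2 * θ.1)))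

def alternatingStep (ne nd : ℕ) : ℝ × ℝ → ℝ × ℝ :=
  (discriminatorStep η g)^[nd] ∘ (encoderStep η g)^[ne]

theorem encoderStep_eq (h : ℝ → ℝ) :
    (fun θ : ℝ × ℝ => (θ.1 - η * deriv (fun a => h (θ.2 * a)) θ.1, θ.2)) =
      encoderStep η (deriv h) := by
  funext θ
  rw [deriv_comp_mul_left, smul_eq_mul, encoderStep]

theorem discriminatorStep_eq (h : ℝ → ℝ) :
    (fun θ : ℝ × ℝ => (θ.1, θ.2 + η * deriv (fun b => h (b * θ.1)) θ.2)) =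
      discriminatorStep η (deriv h) := by
  funext θ
  simp_rw [mul_comm _ θ.1]
  rw [deriv_comp_mul_left, smul_eq_mul, discriminatorStep, mul_comm θ.1 θ.2]

@[simp]
theorem encoderStep_zero : encoderStep η g 0 = 0 := by
  simp [encoderStep]

@[simp]
theorem discriminatorStep_zero : discriminatorStep η g 0 = 0 := by
  simp [discriminatorStep]

theorem alternatingStep_zero (ne nd : ℕ) : alternatingStep η g ne nd 0 = 0 := by
  rw [alternatingStep, Function.comp_apply, Function.iterate_fixed (encoderStep_zero η g),
    Function.iterate_fixed (discriminatorStep_zero η g)]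

variable {g}

theorem hasFDerivAt_encoderStep (hg : DifferentiableAt ℝ g 0) :
    HasFDerivAt (encoderStep η g) (mat2CLM 1 (-(η * g 0)) 0 1) 0 := by
  have hfst : HasFDerivAt (Prod.fst : ℝ × ℝ → ℝ) (ContinuousLinearMap.fst ℝ ℝ ℝ) 0 :=
    hasFDerivAt_fst
  have hsnd : HasFDerivAt (Prod.snd : ℝ × ℝ → ℝ) (ContinuousLinearMap.snd ℝ ℝ ℝ) 0 :=
    hasFDerivAt_snd
  have hgθ := hg.hasDerivAt.comp_hasFDerivAt_of_eq 0 (hsnd.mul hfst) (by simp)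
  refine ((hfst.sub ((hsnd.mul hgθ).const_mul η)).prodMk hsnd).congr_fderiv ?_
  ext <;> simp

theorem hasFDerivAt_discriminatorStep (hg : DifferentiableAt ℝ g 0) :
    HasFDerivAt (discriminatorStep η g) (mat2CLM 1 0 (η * g 0) 1) 0 := by
  have hfst : HasFDerivAt (Prod.fst : ℝ × ℝ → ℝ) (ContinuousLinearMap.fst ℝ ℝ ℝ) 0 :=
    hasFDerivAt_fst
  have hsnd : HasFDerivAt (Prod.snd : ℝ × ℝ → ℝ) (ContinuousLinearMap.snd ℝ ℝ ℝ) 0 :=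
    hasFDerivAt_snd
  have hgθ := hg.hasDerivAt.comp_hasFDerivAt_of_eq 0 (hsnd.mul hfst) (by simp)
  refine (hfst.prodMk (hsnd.add ((hfst.mul hgθ).const_mul η))).congr_fderiv ?_
  ext <;> simp

theorem hasFDerivAt_alternatingStep (hg : DifferentiableAt ℝ g 0) (ne nd : ℕ) :
    HasFDerivAt (alternatingStep η g ne nd)
      (mat2CLM 1 (-(ne * (η * g 0))) (nd * (η * g 0)) (1 - ne * nd * (η * g 0) ^ 2)) 0 := by
  have hD := (hasFDerivAt_discriminatorStep η hg).iterate (discriminatorStep_zero η g) nd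
  rw [← Function.iterate_fixed (encoderStep_zero η g) ne] at hD
  have h := hD.comp 0 ((hasFDerivAt_encoderStep η hg).iterate (encoderStep_zero η g) ne)
  rw [← ContinuousLinearMap.mul_def, mat2CLM_lower_pow, mat2CLM_upper_pow, mat2CLM_mul] at h
  exact h.congr_fderiv (by congr 1 <;> ring)

end AlternatingGradientSteps

theorem Matrix.mem_spectrum_fin_two_iff {K : Type*} [Field K] (M : Matrix (Fin 2) (Fin 2) K)
    (μ : K) : μ ∈ spectrum K M ↔ μ ^ 2 - M.trace * μ + M.det = 0 := by
  rw [spectrum.mem_iff, Matrix.isUnit_iff_isUnit_det, isUnit_iff_ne_zero, not_ne_iff,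
    Matrix.det_fin_two, Matrix.trace_fin_two, Matrix.det_fin_two]
  simp only [Matrix.sub_apply, Matrix.algebraMap_matrix_apply, Algebra.algebraMap_self,
    RingHom.id_apply, if_true, Fin.zero_ne_one, one_ne_zero, if_false]
  constructor <;> intro h <;> linear_combination h

theorem Matrix.mem_spectrum_map_ofReal_fin_two_iff (M : Matrix (Fin 2) (Fin 2) ℝ) (μ : ℂ) :
    μ ∈ spectrum ℂ (M.map (fun a => (a : ℂ))) ↔ μ ^ 2 - M.trace * μ + M.det = 0 := by
  rw [Matrix.mem_spectrum_fin_two_iff, Matrix.trace_fin_two, Matrix.trace_fin_two,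
    Matrix.det_fin_two, Matrix.det_fin_two]
  simp only [Matrix.map_apply]
  push_cast
  rfl

theorem Matrix.spectrum_map_ofReal_fin_two_eq_pair (M : Matrix (Fin 2) (Fin 2) ℝ) {s : ℝ} {w : ℂ}
    (htr : M.trace = 2 * s) (hw : w ^ 2 = s ^ 2 - M.det) :
    spectrum ℂ (M.map (fun a => (a : ℂ))) = {(s : ℂ) + w, (s : ℂ) - w} := by
  ext μ
  have hfac : μ ^ 2 - ((2 * s : ℝ) : ℂ) * μ + M.det = (μ - (s + w)) * (μ - (s - w)) := by
    push_cast
    linear_combination hw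
  rw [Matrix.mem_spectrum_map_ofReal_fin_two_iff, htr, hfac, mul_eq_zero, sub_eq_zero,
    sub_eq_zero, Set.mem_insert_iff, Set.mem_singleton_iff]

theorem Complex.norm_eq_one_of_sq_sub_mul_add_one_eq_zero {t : ℝ} (ht : |t| ≤ 2) {μ : ℂ}
    (hμ : μ ^ 2 - t * μ + 1 = 0) : ‖μ‖ = 1 := by
  have hre := congrArg Complex.re hμ
  have him := congrArg Complex.im hμ
  simp only [sq, Complex.sub_re, Complex.add_re, Complex.mul_re, Complex.ofReal_re,
    Complex.ofReal_im, Complex.one_re, Complex.zero_re, Complex.sub_im, Complex.add_im,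
    Complex.mul_im, Complex.one_im, Complex.zero_im] at hre him
  have ht2 : t ^ 2 ≤ 4 := by nlinarith [abs_le.mp ht, sq_abs t]
  have hnorm : μ.re ^ 2 + μ.im ^ 2 = 1 := by
    rcases mul_eq_zero.mp (show μ.im * (2 * μ.re - t) = 0 by linarith) with h | h
    · have : (2 * μ.re - t) ^ 2 = 0 := by nlinarith
      nlinarith
    · have : t * μ.re = 2 * μ.re * μ.re := by rw [show t = 2 * μ.re by linarith]
      linarith
  rw [← pow_eq_one_iff_of_nonneg (norm_nonneg μ) two_ne_zero, Complex.sq_norm,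
    Complex.normSq_apply, ← hnorm]
  ring

theorem exists_sq_sub_mul_add_one_eq_zero_one_lt_abs {t : ℝ} (ht : 2 < |t|) :
    ∃ x : ℝ, x ^ 2 - t * x + 1 = 0 ∧ 1 < |x| := by
  have hd : 0 ≤ t ^ 2 - 4 := by nlinarith [sq_abs t]
  have hsq := Real.sq_sqrt hd
  have hpos := Real.sqrt_nonneg (t ^ 2 - 4)
  rcases lt_abs.mp ht with h | h
  · exact ⟨(t + √(t ^ 2 - 4)) / 2, by linear_combination hsq / 4,
      by rw [lt_abs]; left; linarith⟩
  · exact ⟨(t - √(t ^ 2 - 4)) / 2, by linear_combination hsq / 4,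
      by rw [lt_abs]; right; linarith⟩

theorem Matrix.forall_mem_spectrum_map_ofReal_norm_eq_one_iff {M : Matrix (Fin 2) (Fin 2) ℝ}
    (hdet : M.det = 1) :
    (∀ μ ∈ spectrum ℂ (M.map (fun a => (a : ℂ))), ‖μ‖ = 1) ↔ |M.trace| ≤ 2 := by
  simp only [Matrix.mem_spectrum_map_ofReal_fin_two_iff, hdet, Complex.ofReal_one]
  refine ⟨fun h => ?_, fun ht μ hμ => Complex.norm_eq_one_of_sq_sub_mul_add_one_eq_zero ht hμ⟩
  by_contra! ht
  obtain ⟨x, hx, hx1⟩ := exists_sq_sub_mul_add_one_eq_zero_one_lt_abs ht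
  have := h x (by exact_mod_cast hx)
  rw [Complex.norm_real, Real.norm_eq_abs] at this
  linarith

theorem Matrix.exists_mem_spectrum_map_ofReal_one_lt_norm {M : Matrix (Fin 2) (Fin 2) ℝ}
    (hdet : M.det = 1) (ht : 2 < |M.trace|) :
    ∃ μ ∈ spectrum ℂ (M.map (fun a => (a : ℂ))), 1 < ‖μ‖ := by
  obtain ⟨x, hx, hx1⟩ := exists_sq_sub_mul_add_one_eq_zero_one_lt_abs ht
  refine ⟨x, ?_, by rwa [Complex.norm_real, Real.norm_eq_abs]⟩
  rw [Matrix.mem_spectrum_map_ofReal_fin_two_iff, hdet]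
  exact_mod_cast hx

theorem abs_two_sub_sq_le_two_iff_le_div {η k : ℝ} (hη : 0 ≤ η) (hk : 0 < k) :
    |2 - (η * k / 2) ^ 2| ≤ 2 ↔ η ≤ 4 / k := by
  have hηk : 0 ≤ η * k := mul_nonneg hη hk.le
  rw [abs_le, le_div_iff₀ hk]
  constructor
  · intro h; nlinarith
  · intro h; constructor <;> nlinarith

/-- For the toy DANN objective with alternating gradient descent
(`n_e` encoder steps followed by `n_d` discriminator steps), (0,0) is a fixed point of
the combined operator `F_η = F_{η,2}^{n_d} ∘ F_{η,1}^{n_e}`; its Jacobian at (0,0) is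
`[[1, −η n_e (x_s−x_t)/2], [η n_d (x_s−x_t)/2, 1 − η² n_e n_d (x_s−x_t)²/4]]`; with
`α = (η/2)√(n_e n_d)|x_s − x_t|`, the complex eigenvalues are
`1 − α²/2 ± √((1 − α²/2)² − 1)` with product 1, and both have modulus exactly 1 iff
`η ≤ 4/(√(n_e n_d)|x_s − x_t|)`, while otherwise some eigenvalue has modulus > 1. -/
theorem stmt14 (xs xt : ℝ) (hx : xs ≠ xt) (η : ℝ) (hη : 0 < η)
    (ne nd : ℕ) (hne : 1 ≤ ne) (hnd : 1 ≤ nd) :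
    let f : ℝ → ℝ := fun t => Real.log (1 / (1 + Real.exp (-t)))
    let d : ℝ → ℝ → ℝ := fun θe θd => f (θd * θe * xs) + f (-(θd * θe * xt))
    let F1 : ℝ × ℝ → ℝ × ℝ := fun θ => (θ.1 - η * deriv (fun a => d a θ.2) θ.1, θ.2)
    let F2 : ℝ × ℝ → ℝ × ℝ := fun θ => (θ.1, θ.2 + η * deriv (fun b => d θ.1 b) θ.2)
    let F : ℝ × ℝ → ℝ × ℝ := (F2^[nd]) ∘ (F1^[ne])
    let J : Matrix (Fin 2) (Fin 2) ℝ :=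
      !![1, -(η * (ne : ℝ) * (xs - xt) / 2);
         η * (nd : ℝ) * (xs - xt) / 2,
         1 - η ^ 2 * (ne : ℝ) * (nd : ℝ) * (xs - xt) ^ 2 / 4]
    let Jc : Matrix (Fin 2) (Fin 2) ℂ := J.map (fun a => (a : ℂ))
    let α : ℝ := η / 2 * Real.sqrt ((ne : ℝ) * (nd : ℝ)) * |xs - xt|
    F (0, 0) = (0, 0) ∧
    (∀ v : ℝ × ℝ, fderiv ℝ F (0, 0) v
        = (J 0 0 * v.1 + J 0 1 * v.2, J 1 0 * v.1 + J 1 1 * v.2)) ∧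
    (∃ w : ℂ, w ^ 2 = ((1 - α ^ 2 / 2 : ℝ) : ℂ) ^ 2 - 1 ∧
      spectrum ℂ Jc = {((1 - α ^ 2 / 2 : ℝ) : ℂ) + w, ((1 - α ^ 2 / 2 : ℝ) : ℂ) - w} ∧
      (((1 - α ^ 2 / 2 : ℝ) : ℂ) + w) * (((1 - α ^ 2 / 2 : ℝ) : ℂ) - w) = 1) ∧
    ((∀ μ ∈ spectrum ℂ Jc, ‖μ‖ = 1) ↔
        η ≤ 4 / (Real.sqrt ((ne : ℝ) * (nd : ℝ)) * |xs - xt|)) ∧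
    (¬ η ≤ 4 / (Real.sqrt ((ne : ℝ) * (nd : ℝ)) * |xs - xt|) →
        ∃ μ ∈ spectrum ℂ Jc, 1 < ‖μ‖) := by
  intro f d F1 F2 F J Jc α
  set g := deriv (dannPotential xs xt)
  have hF : F = alternatingStep η g ne nd := by
    show F2^[nd] ∘ F1^[ne] = _
    rw [show F1 = _ from encoderStep_eq η (dannPotential xs xt),
      show F2 = _ from discriminatorStep_eq η (dannPotential xs xt), alternatingStep]
  have hDF := hasFDerivAt_alternatingStep η (differentiable_deriv_dannPotential xs xt 0) ne nd
  rw [← hF, deriv_dannPotential_zero] at hDF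
  have hk : 0 < √((ne : ℝ) * nd) * |xs - xt| :=
    mul_pos (Real.sqrt_pos.mpr (by positivity)) (abs_pos.mpr (sub_ne_zero.mpr hx))
  have hα : α = η * (√((ne : ℝ) * nd) * |xs - xt|) / 2 := by ring
  have htr : J.trace = 2 * (1 - α ^ 2 / 2) := by
    rw [hα, div_pow, mul_pow, mul_pow, Real.sq_sqrt (by positivity), sq_abs]
    simp only [J, Matrix.trace_fin_two_of]
    ring
  have hdet : J.det = 1 := by
    simp only [J, Matrix.det_fin_two_of]
    ring
  have hcrit : |J.trace| ≤ 2 ↔ η ≤ 4 / (√((ne : ℝ) * nd) * |xs - xt|) := by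
    rw [htr, show 2 * (1 - α ^ 2 / 2) = 2 - α ^ 2 by ring, hα]
    exact abs_two_sub_sq_le_two_iff_le_div hη.le hk
  obtain ⟨w, hw⟩ := IsAlgClosed.exists_pow_nat_eq (((1 - α ^ 2 / 2 : ℝ) : ℂ) ^ 2 - 1) two_pos
  refine ⟨hF ▸ alternatingStep_zero η g ne nd, fun v => ?_, ⟨w, hw, ?_, by linear_combination -hw⟩,
    (Matrix.forall_mem_spectrum_map_ofReal_norm_eq_one_iff hdet).trans hcrit,
    fun h => Matrix.exists_mem_spectrum_map_ofReal_one_lt_norm hdet (not_le.mp (mt hcrit.mp h))⟩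
  · show fderiv ℝ F 0 v = _
    rw [hDF.fderiv, mat2CLM_apply]
    simp only [J, Matrix.of_apply, Matrix.cons_val', Matrix.cons_val_zero, Matrix.cons_val_one,
      Matrix.cons_val_fin_one, Matrix.empty_val']
    ext <;> ring
  · exact Matrix.spectrum_map_ofReal_fin_two_eq_pair J htr (by rw [hdet, Complex.ofReal_one]; exact hw)
end
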